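/- arXiv:1004.2027 — 3 statements merged into one kernel-verified Lean document; each statement's English description precedes it below -/
import Mathlib

section
/- Consider the approximate DPP iteration with parameter η > 0 started from Ψ_0 with ‖Ψ_0‖ ≤ V_max, with error functions ε_k and accumulated errors E_k = Σ_{j=0}^k ε_j, and define the auxiliary action-value functions by Q_0 = Ψ_0 and Q_k = ((k−1)/k) T^{π_{k−1}} Q_{k−1} + (1/k)(T^{π_{k−1}} Q_0 + E_{k−1}) for k ≥ 1, where π_k is the soft-max policy associated with Ψ_k. Then for every integer k ≥ 1: ‖Q* − Q_k‖ ≤ γ(4 V_max + log(L)/η)/((1−γ) k) + (1/k) Σ_{j=1}^{k} γ^{k−j} ‖E_{j−1}‖. -/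
open Finset Real Filter

variable {X A : Type*}

/-- `(πQ)(x) = Σ_a π(a|x) Q(x,a)`. -/
noncomputable def polApply [Fintype A] (pol : X → A → ℝ) (Q : X → A → ℝ) : X → ℝ :=
  fun x => ∑ a, pol x a * Q x a

/-- Bellman operator `T^π`. -/
noncomputable def bellman [Fintype X] [Fintype A]
    (P : X → A → X → ℝ) (r : X → A → ℝ) (γ : ℝ) (pol : X → A → ℝ)
    (Q : X → A → ℝ) : X → A → ℝ :=
  fun x a => r x a + γ * ∑ x', ∑ a', P x a x' * pol x' a' * Q x' a'

/-- Bellman optimality operator `T`. -/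
noncomputable def bellmanOpt [Fintype X] [Fintype A] [Nonempty A]
    (P : X → A → X → ℝ) (r : X → A → ℝ) (γ : ℝ) (Q : X → A → ℝ) : X → A → ℝ :=
  fun x a => r x a + γ * ∑ x', P x a x' * (Finset.univ.sup' Finset.univ_nonempty (Q x'))

/-- Soft-max policy associated with action preferences `Ψ` at inverse temperature `η`. -/
noncomputable def softmaxPol [Fintype A] (η : ℝ) (Ψ : X → A → ℝ) : X → A → ℝ :=
  fun x a => Real.exp (η * Ψ x a) / ∑ a', Real.exp (η * Ψ x a')

/-- Supremum norm over state-action pairs. -/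
noncomputable def supNorm [Fintype X] [Fintype A] [Nonempty X] [Nonempty A]
    (Q : X → A → ℝ) : ℝ :=
  Finset.univ.sup' Finset.univ_nonempty (fun p : X × A => |Q p.1 p.2|)

/-!
With the baseline `S_k = Σ_{j<k} π_j Ψ_j`, the DPP iterates unroll to
`Ψ_k = Ψ_0 + k r + γ P S_k - S_k + Σ_{j<k} ε_j`, and the auxiliary functions to
`k Q_k = k r + γ P S_k + E_{k-1}`; hence `k Q_k + Ψ_0 = Ψ_k + S_k` and
`S_{k+1} = π_k (k Q_k + Ψ_0)`.
Comparing `(k+1) Q_{k+1}` with `(k+1) Q* = (k+1) r + γ P ((k+1) max Q*)`, the policy `π_k` loses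
against the greedy maximum only the soft-max gap `max Ψ_k - π_k Ψ_k ≤ log L / η`, an entropy bound.
This gives `(k+1) ‖Q* - Q_{k+1}‖ ≤ γ (k ‖Q* - Q_k‖ + 2 V_max + log L / η) + ‖E_k‖`, a contracting
recurrence which unrolls to the claim.
-/

lemma le_of_contracting_recurrence {γ c : ℝ} {u e : ℕ → ℝ} (hγ0 : 0 ≤ γ) (hγ1 : γ < 1)
    (hc : 0 ≤ c) (hu0 : u 0 = 0) (hu : ∀ k, u (k + 1) ≤ γ * (u k + c) + e k) (k : ℕ) :
    u (k + 1) ≤ γ * c / (1 - γ) + ∑ j ∈ range (k + 1), γ ^ (k - j) * e j := by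
  have h1γ : 0 < 1 - γ := sub_pos.2 hγ1
  induction k with
  | zero =>
    have : γ * c ≤ γ * c / (1 - γ) := by
      rw [le_div_iff₀ h1γ]
      nlinarith [mul_nonneg (mul_nonneg hγ0 hc) hγ0]
    have h0 := hu 0
    rw [hu0, zero_add] at h0
    simp only [zero_add, sum_range_one, Nat.sub_self, pow_zero, one_mul]
    linarith
  | succ k ih =>
    have hsum : ∑ j ∈ range (k + 2), γ ^ (k + 1 - j) * e j
        = γ * ∑ j ∈ range (k + 1), γ ^ (k - j) * e j + e (k + 1) := by
      rw [sum_range_succ, Nat.sub_self, pow_zero, one_mul, mul_sum]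
      congr 1
      refine sum_congr rfl fun j hj => ?_
      rw [Nat.sub_add_comm (Nat.lt_succ_iff.1 (mem_range.1 hj)), pow_succ]
      ring
    rw [hsum]
    calc u (k + 2) ≤ γ * (u (k + 1) + c) + e (k + 1) := hu (k + 1)
      _ ≤ γ * (γ * c / (1 - γ) + ∑ j ∈ range (k + 1), γ ^ (k - j) * e j + c) + e (k + 1) := by
        gcongr
      _ = _ := by field_simp; ring

section StdSimplex

variable {ι : Type*} [Fintype ι] {w f : ι → ℝ} {c : ℝ}

lemma le_sum_mul_of_mem_stdSimplex (hw : w ∈ stdSimplex ℝ ι) (hf : ∀ i, c ≤ f i) :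
    c ≤ ∑ i, w i * f i :=
  calc c = ∑ i, w i * c := by rw [← sum_mul, hw.2, one_mul]
    _ ≤ ∑ i, w i * f i := sum_le_sum fun i _ => mul_le_mul_of_nonneg_left (hf i) (hw.1 i)

lemma sum_mul_le_of_mem_stdSimplex (hw : w ∈ stdSimplex ℝ ι) (hf : ∀ i, f i ≤ c) :
    ∑ i, w i * f i ≤ c :=
  calc ∑ i, w i * f i ≤ ∑ i, w i * c :=
        sum_le_sum fun i _ => mul_le_mul_of_nonneg_left (hf i) (hw.1 i)
    _ = c := by rw [← sum_mul, hw.2, one_mul]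

lemma abs_sum_mul_le_of_mem_stdSimplex (hw : w ∈ stdSimplex ℝ ι) (hf : ∀ i, |f i| ≤ c) :
    |∑ i, w i * f i| ≤ c :=
  abs_le.2 ⟨le_sum_mul_of_mem_stdSimplex hw fun i => (abs_le.1 (hf i)).1,
    sum_mul_le_of_mem_stdSimplex hw fun i => (abs_le.1 (hf i)).2⟩

lemma sum_negMulLog_le_log_card (hw : w ∈ stdSimplex ℝ ι) :
    ∑ i, negMulLog (w i) ≤ log (Fintype.card ι) := by
  have hL : (0 : ℝ) < Fintype.card ι := by
    obtain ⟨i, -⟩ := exists_ne_zero_of_sum_ne_zero (hw.2.trans_ne one_ne_zero)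
    exact_mod_cast Fintype.card_pos_iff.2 ⟨i⟩
  have hjensen := concaveOn_negMulLog.le_map_sum (t := univ) (w := fun _ => (Fintype.card ι : ℝ)⁻¹)
    (p := w) (fun _ _ => by positivity) (by simp [hL.ne']) fun i _ => Set.mem_Ici.2 (hw.1 i)
  have hunif :
      negMulLog (Fintype.card ι : ℝ)⁻¹ = (Fintype.card ι : ℝ)⁻¹ * log (Fintype.card ι) := by
    simp [negMulLog, log_inv]
  simp only [smul_eq_mul, ← mul_sum, hw.2, mul_one, hunif] at hjensen
  exact le_of_mul_le_mul_left hjensen (inv_pos.2 hL)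

end StdSimplex

section SupNorm

variable [Fintype X] [Fintype A] [Nonempty X] [Nonempty A]

lemma abs_le_supNorm (Q : X → A → ℝ) (x : X) (a : A) : |Q x a| ≤ supNorm Q :=
  le_sup' (fun p : X × A => |Q p.1 p.2|) (mem_univ (x, a))

lemma supNorm_le {Q : X → A → ℝ} {M : ℝ} (h : ∀ x a, |Q x a| ≤ M) : supNorm Q ≤ M :=
  sup'_le _ _ fun p _ => h p.1 p.2

lemma supNorm_nonneg (Q : X → A → ℝ) : 0 ≤ supNorm Q :=
  (abs_nonneg _).trans (abs_le_supNorm Q (Classical.arbitrary X) (Classical.arbitrary A))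

lemma abs_sup'_le_supNorm (Q : X → A → ℝ) (x : X) :
    |univ.sup' univ_nonempty (Q x)| ≤ supNorm Q := by
  obtain ⟨a, -, ha⟩ := exists_mem_eq_sup' univ_nonempty (Q x)
  exact ha ▸ abs_le_supNorm Q x a

end SupNorm

section Softmax

variable [Fintype A] [Nonempty A]

lemma softmaxPol_mem_stdSimplex (η : ℝ) (Ψ : X → A → ℝ) (x : X) :
    softmaxPol η Ψ x ∈ stdSimplex ℝ A := by
  have hZ : 0 < ∑ a, exp (η * Ψ x a) := sum_pos (fun _ _ => exp_pos _) univ_nonempty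
  refine ⟨fun a => div_nonneg (exp_pos _).le hZ.le, ?_⟩
  simp only [softmaxPol, ← sum_div, div_self hZ.ne']

lemma sum_softmaxPol_mul_sub_le {η : ℝ} (hη : 0 < η) (Ψ : X → A → ℝ) (x : X) (b : A) :
    ∑ a, softmaxPol η Ψ x a * (Ψ x b - Ψ x a) ≤ log (Fintype.card A) / η := by
  set Z := ∑ a, exp (η * Ψ x a)
  have hZ : 0 < Z := sum_pos (fun _ _ => exp_pos _) univ_nonempty
  have hp := softmaxPol_mem_stdSimplex η Ψ x
  have hlog : ∀ a, log (softmaxPol η Ψ x a) = η * Ψ x a - log Z := fun a => by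
    rw [softmaxPol, log_div (exp_pos _).ne' hZ.ne', log_exp]
  have hb : η * Ψ x b ≤ log Z := by
    rw [← log_exp (η * Ψ x b)]
    exact log_le_log (exp_pos _) (single_le_sum (fun a _ => (exp_pos (η * Ψ x a)).le) (mem_univ b))
  -- `η (Ψ b - Ψ a) = (η Ψ b - log Z) - log π(a)`, and the first term is nonpositive
  have hterm : ∀ a, softmaxPol η Ψ x a * (η * (Ψ x b - Ψ x a))
      ≤ negMulLog (softmaxPol η Ψ x a) := fun a => by
    rw [negMulLog, hlog]
    nlinarith [hp.1 a]
  rw [le_div_iff₀ hη, sum_mul]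
  calc ∑ a, softmaxPol η Ψ x a * (Ψ x b - Ψ x a) * η
      = ∑ a, softmaxPol η Ψ x a * (η * (Ψ x b - Ψ x a)) := by
        simp only [mul_comm η, mul_assoc]
    _ ≤ ∑ a, negMulLog (softmaxPol η Ψ x a) := sum_le_sum fun a _ => hterm a
    _ ≤ log (Fintype.card A) := sum_negMulLog_le_log_card hp

lemma abs_mul_sup'_sub_polApply_softmaxPol_le {η n c C : ℝ}
    (hη : 0 < η) (hn : 0 ≤ n) {q : A → ℝ} {Ψ : X → A → ℝ} {x : X}
    (h : ∀ a, |n * q a - (Ψ x a + c)| ≤ C) :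
    |n * univ.sup' univ_nonempty q - (c + polApply (softmaxPol η Ψ) Ψ x)|
      ≤ C + log (Fintype.card A) / η := by
  have hp := softmaxPol_mem_stdSimplex η Ψ x
  set p := softmaxPol η Ψ x
  have hℓ : 0 ≤ log (Fintype.card A) / η :=
    div_nonneg (log_nonneg (by exact_mod_cast Fintype.card_pos)) hη.le
  obtain ⟨b, -, hb⟩ := exists_mem_eq_sup' univ_nonempty q
  have hrepr : n * univ.sup' univ_nonempty q - (c + polApply (softmaxPol η Ψ) Ψ x)
      = ∑ a, p a * (n * q b - (Ψ x b + c) + (Ψ x b - Ψ x a)) := by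
    simp only [polApply, mul_add, mul_sub, sum_add_distrib, sum_sub_distrib, ← sum_mul, hp.2, hb]
    ring
  rw [hrepr, abs_le]
  constructor
  · refine le_sum_mul_of_mem_stdSimplex hp fun a => ?_
    have hqa : q a ≤ q b := hb ▸ le_sup' q (mem_univ a)
    nlinarith [(abs_le.1 (h a)).1, mul_le_mul_of_nonneg_left hqa hn]
  · simp only [mul_add, sum_add_distrib, ← sum_mul, hp.2, one_mul]
    exact add_le_add (abs_le.1 (h b)).2 (sum_softmaxPol_mul_sub_le hη Ψ x b)

end Softmax

lemma bellman_apply [Fintype X] [Fintype A] (P : X → A → X → ℝ) (r : X → A → ℝ) (γ : ℝ)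
    (pol Q : X → A → ℝ) (x : X) (a : A) :
    bellman P r γ pol Q x a = r x a + γ * ∑ x', P x a x' * polApply pol Q x' := by
  simp only [bellman, polApply, mul_sum, mul_assoc]

lemma supNorm_le_of_bellmanOpt_eq [Fintype X] [Fintype A] [Nonempty X] [Nonempty A]
    {P : X → A → X → ℝ} {r : X → A → ℝ} {γ Rmax : ℝ} {Q : X → A → ℝ}
    (hP : ∀ x a, P x a ∈ stdSimplex ℝ X) (hr : ∀ x a, |r x a| ≤ Rmax) (hγ0 : 0 ≤ γ)
    (hγ1 : γ < 1) (hQ : bellmanOpt P r γ Q = Q) : supNorm Q ≤ Rmax / (1 - γ) := by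
  have h : supNorm Q ≤ Rmax + γ * supNorm Q := supNorm_le fun x a => by
    rw [← congrFun (congrFun hQ x) a, bellmanOpt]
    refine (abs_add_le _ _).trans (add_le_add (hr x a) ?_)
    rw [abs_mul, abs_of_nonneg hγ0]
    exact mul_le_mul_of_nonneg_left
      (abs_sum_mul_le_of_mem_stdSimplex (hP x a) (abs_sup'_le_supNorm Q)) hγ0
  rw [le_div_iff₀ (sub_pos.2 hγ1)]
  linarith

section DPP

variable [Fintype A]

/-- The accumulated baseline `Σ_{j<k} π_j Ψ_j` subtracted by the first `k` DPP updates. -/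
noncomputable def dppBaseline (pol Ψ : ℕ → X → A → ℝ) (k : ℕ) (x : X) : ℝ :=
  ∑ j ∈ range k, polApply (pol j) (Ψ j) x

lemma dppBaseline_succ (pol Ψ : ℕ → X → A → ℝ) (k : ℕ) (x : X) :
    dppBaseline pol Ψ (k + 1) x = dppBaseline pol Ψ k x + polApply (pol k) (Ψ k) x :=
  sum_range_succ _ _

variable [Fintype X] {P : X → A → X → ℝ} {r : X → A → ℝ} {γ : ℝ} {pol Ψ Q ε E : ℕ → X → A → ℝ}

lemma dpp_iterate_eq (hΨ : ∀ k x a, Ψ (k + 1) x a =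
      Ψ k x a + bellman P r γ (pol k) (Ψ k) x a - polApply (pol k) (Ψ k) x + ε k x a)
    (k : ℕ) (x : X) (a : A) :
    Ψ k x a = Ψ 0 x a + k * r x a + γ * ∑ x', P x a x' * dppBaseline pol Ψ k x'
      - dppBaseline pol Ψ k x + ∑ j ∈ range k, ε j x a := by
  induction k with
  | zero => simp [dppBaseline]
  | succ k ih =>
    simp only [hΨ, ih, bellman_apply, dppBaseline_succ, mul_add, sum_add_distrib,
      sum_range_succ]
    push_cast
    ring

lemma dpp_aux_eq (hpol : ∀ k x, ∑ a, pol k x a = 1)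
    (hΨ : ∀ k x a, Ψ (k + 1) x a =
      Ψ k x a + bellman P r γ (pol k) (Ψ k) x a - polApply (pol k) (Ψ k) x + ε k x a)
    (hE : ∀ k x a, E k x a = ∑ j ∈ range (k + 1), ε j x a) (hQ0 : Q 0 = Ψ 0)
    (hQ : ∀ k : ℕ, ∀ x a, Q (k + 1) x a =
      ((k : ℝ) / (k + 1)) * bellman P r γ (pol k) (Q k) x a +
        (1 / ((k : ℝ) + 1)) * (bellman P r γ (pol k) (Q 0) x a + E k x a))
    (k : ℕ) (x : X) (a : A) :
    k * Q k x a = k * r x a + γ * ∑ x', P x a x' * dppBaseline pol Ψ k x'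
      + ∑ j ∈ range k, ε j x a := by
  induction k generalizing x a with
  | zero => simp [dppBaseline]
  | succ k ih =>
    have hkey : ∀ x a, k * Q k x a + Ψ 0 x a = Ψ k x a + dppBaseline pol Ψ k x :=
      fun x a => by linarith [ih x a, dpp_iterate_eq hΨ k x a]
    have hmix : ∀ x', k * polApply (pol k) (Q k) x' + polApply (pol k) (Q 0) x'
        = dppBaseline pol Ψ (k + 1) x' := fun x' => by
      simp only [polApply, hQ0, mul_sum, ← sum_add_distrib, dppBaseline_succ]
      calc ∑ a, (k * (pol k x' a * Q k x' a) + pol k x' a * Ψ 0 x' a)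
          = ∑ a, (pol k x' a * Ψ k x' a + pol k x' a * dppBaseline pol Ψ k x') :=
            sum_congr rfl fun a _ => by rw [← mul_add, ← hkey]; ring
        _ = _ := by rw [sum_add_distrib, ← sum_mul, hpol, one_mul, add_comm]
    have hQk : ((k + 1 : ℕ) : ℝ) * Q (k + 1) x a
        = k * bellman P r γ (pol k) (Q k) x a + (bellman P r γ (pol k) (Q 0) x a + E k x a) := by
      rw [hQ]
      push_cast
      field_simp
    rw [hQk, bellman_apply, bellman_apply, hE, ← funext hmix]
    simp only [mul_add, sum_add_distrib, mul_left_comm _ (k : ℝ), ← mul_sum]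
    push_cast
    ring

lemma dpp_aux_add_eq (hpol : ∀ k x, ∑ a, pol k x a = 1)
    (hΨ : ∀ k x a, Ψ (k + 1) x a =
      Ψ k x a + bellman P r γ (pol k) (Ψ k) x a - polApply (pol k) (Ψ k) x + ε k x a)
    (hE : ∀ k x a, E k x a = ∑ j ∈ range (k + 1), ε j x a) (hQ0 : Q 0 = Ψ 0)
    (hQ : ∀ k : ℕ, ∀ x a, Q (k + 1) x a =
      ((k : ℝ) / (k + 1)) * bellman P r γ (pol k) (Q k) x a +
        (1 / ((k : ℝ) + 1)) * (bellman P r γ (pol k) (Q 0) x a + E k x a))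
    (k : ℕ) (x : X) (a : A) :
    k * Q k x a + Ψ 0 x a = Ψ k x a + dppBaseline pol Ψ k x := by
  linarith [dpp_aux_eq hpol hΨ hE hQ0 hQ k x a, dpp_iterate_eq hΨ k x a]

lemma abs_succ_mul_sup'_sub_dppBaseline_le [Nonempty X] [Nonempty A] {η V : ℝ}
    {Qstar : X → A → ℝ} (hη : 0 < η) {k : ℕ} (hpol : pol k = softmaxPol η (Ψ k))
    (hQstar_le : supNorm Qstar ≤ V) (hΨ0 : supNorm (Ψ 0) ≤ V)
    (hkey : ∀ x a, k * Q k x a + Ψ 0 x a = Ψ k x a + dppBaseline pol Ψ k x) (x : X) :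
    |(k + 1) * univ.sup' univ_nonempty (Qstar x) - dppBaseline pol Ψ (k + 1) x|
      ≤ k * supNorm (fun x a => Qstar x a - Q k x a) + (2 * V + log (Fintype.card A) / η) := by
  rw [dppBaseline_succ, hpol, ← add_assoc]
  refine abs_mul_sup'_sub_polApply_softmaxPol_le hη (by positivity) fun a => ?_
  rw [← hkey]
  calc |(k + 1) * Qstar x a - (k * Q k x a + Ψ 0 x a)|
      = |k * (Qstar x a - Q k x a) + (Qstar x a - Ψ 0 x a)| := by ring_nf
    _ ≤ k * supNorm (fun x a => Qstar x a - Q k x a) + (V + V) := by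
      refine (abs_add_le _ _).trans (add_le_add ?_ ((abs_sub _ _).trans (add_le_add ?_ ?_)))
      · rw [abs_mul, Nat.abs_cast]
        exact mul_le_mul_of_nonneg_left
          (abs_le_supNorm (fun x a => Qstar x a - Q k x a) x a) k.cast_nonneg
      · exact (abs_le_supNorm Qstar x a).trans hQstar_le
      · exact (abs_le_supNorm (Ψ 0) x a).trans hΨ0
    _ = k * supNorm (fun x a => Qstar x a - Q k x a) + 2 * V := by ring

lemma succ_mul_supNorm_sub_dpp_aux_le [Nonempty X] [Nonempty A] {η V : ℝ} {Qstar : X → A → ℝ}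
    (hP : ∀ x a, P x a ∈ stdSimplex ℝ X) (hγ0 : 0 ≤ γ) (hη : 0 < η)
    (hpol : ∀ k, pol k = softmaxPol η (Ψ k))
    (hΨ : ∀ k x a, Ψ (k + 1) x a =
      Ψ k x a + bellman P r γ (pol k) (Ψ k) x a - polApply (pol k) (Ψ k) x + ε k x a)
    (hE : ∀ k x a, E k x a = ∑ j ∈ range (k + 1), ε j x a) (hQ0 : Q 0 = Ψ 0)
    (hQ : ∀ k : ℕ, ∀ x a, Q (k + 1) x a =
      ((k : ℝ) / (k + 1)) * bellman P r γ (pol k) (Q k) x a +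
        (1 / ((k : ℝ) + 1)) * (bellman P r γ (pol k) (Q 0) x a + E k x a))
    (hQstar : bellmanOpt P r γ Qstar = Qstar) (hQstar_le : supNorm Qstar ≤ V)
    (hΨ0 : supNorm (Ψ 0) ≤ V) (k : ℕ) :
    ((k : ℝ) + 1) * supNorm (fun x a => Qstar x a - Q (k + 1) x a) ≤
      γ * (k * supNorm (fun x a => Qstar x a - Q k x a) + (2 * V + log (Fintype.card A) / η))
        + supNorm (E k) := by
  have hpol1 : ∀ k x, ∑ a, pol k x a = 1 :=
    fun k x => hpol k ▸ (softmaxPol_mem_stdSimplex η (Ψ k) x).2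
  have hbase := abs_succ_mul_sup'_sub_dppBaseline_le hη (hpol k) hQstar_le hΨ0
    (dpp_aux_add_eq hpol1 hΨ hE hQ0 hQ k)
  have hk : (0 : ℝ) < k + 1 := by positivity
  rw [← le_div_iff₀' hk]
  refine supNorm_le fun x a => ?_
  have hgap : ((k : ℝ) + 1) * (Qstar x a - Q (k + 1) x a) = γ * ∑ x', P x a x' *
      ((k + 1) * univ.sup' univ_nonempty (Qstar x') - dppBaseline pol Ψ (k + 1) x') - E k x a := by
    have hnext := dpp_aux_eq hpol1 hΨ hE hQ0 hQ (k + 1) x a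
    push_cast at hnext
    rw [mul_sub, hnext, ← hE, ← congrFun (congrFun hQstar x) a]
    simp only [bellmanOpt, mul_sub, sum_sub_distrib, mul_left_comm _ ((k : ℝ) + 1), ← mul_sum]
    ring
  have h : |((k : ℝ) + 1) * (Qstar x a - Q (k + 1) x a)| ≤ γ * (k * supNorm
      (fun x a => Qstar x a - Q k x a) + (2 * V + log (Fintype.card A) / η)) + supNorm (E k) := by
    rw [hgap]
    refine (abs_sub _ _).trans (add_le_add ?_ (abs_le_supNorm (E k) x a))
    rw [abs_mul, abs_of_nonneg hγ0]
    exact mul_le_mul_of_nonneg_left (abs_sum_mul_le_of_mem_stdSimplex (hP x a) hbase) hγ0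
  rwa [abs_mul, abs_of_pos hk, ← le_div_iff₀' hk] at h

end DPP

theorem approx_dpp_auxiliary_error_bound_general
    {X A : Type*} [Fintype X] [Fintype A] [Nonempty X] [Nonempty A]
    (P : X → A → X → ℝ) (hP0 : ∀ x a x', 0 ≤ P x a x') (hP1 : ∀ x a, ∑ x', P x a x' = 1)
    (r : X → A → ℝ) (Rmax : ℝ) (hr : ∀ x a, |r x a| ≤ Rmax)
    (γ : ℝ) (hγ0 : 0 ≤ γ) (hγ1 : γ < 1)
    (Vmax : ℝ) (hV : Vmax = Rmax / (1 - γ))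
    (η : ℝ) (hη : 0 < η)
    (ε : ℕ → X → A → ℝ)
    (E : ℕ → X → A → ℝ)
    (hE : ∀ k x a, E k x a = ∑ j ∈ Finset.range (k + 1), ε j x a)
    (Ψ : ℕ → X → A → ℝ) (hΨ0 : supNorm (Ψ 0) ≤ Vmax)
    (pol : ℕ → X → A → ℝ) (hpol : ∀ k, pol k = softmaxPol η (Ψ k))
    (hΨ : ∀ k x a, Ψ (k + 1) x a =
      Ψ k x a + bellman P r γ (pol k) (Ψ k) x a - polApply (pol k) (Ψ k) x + ε k x a)
    (Qstar : X → A → ℝ) (hQstar : bellmanOpt P r γ Qstar = Qstar)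
    (Q : ℕ → X → A → ℝ) (hQ0 : Q 0 = Ψ 0)
    (hQ : ∀ k : ℕ, ∀ x a, Q (k + 1) x a =
      ((k : ℝ) / (k + 1)) * bellman P r γ (pol k) (Q k) x a +
        (1 / ((k : ℝ) + 1)) * (bellman P r γ (pol k) (Q 0) x a + E k x a)) :
    ∀ k : ℕ, supNorm (fun x a => Qstar x a - Q (k + 1) x a) ≤
      γ * (4 * Vmax + Real.log (Fintype.card A) / η) / ((1 - γ) * ((k : ℝ) + 1)) +
        (1 / ((k : ℝ) + 1)) *
          ∑ j ∈ Finset.range (k + 1), γ ^ (k - j) * supNorm (E j) := by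
  have hP : ∀ x a, P x a ∈ stdSimplex ℝ X := fun x a => ⟨hP0 x a, hP1 x a⟩
  have hQstar_le : supNorm Qstar ≤ Vmax := hV ▸ supNorm_le_of_bellmanOpt_eq hP hr hγ0 hγ1 hQstar
  have hV0 : 0 ≤ Vmax := (supNorm_nonneg _).trans hΨ0
  have hℓ : 0 ≤ log (Fintype.card A) / η :=
    div_nonneg (log_nonneg (by exact_mod_cast Fintype.card_pos)) hη.le
  intro k
  have hrec := le_of_contracting_recurrence hγ0 hγ1
    (u := fun k => k * supNorm (fun x a => Qstar x a - Q k x a)) (e := fun j => supNorm (E j))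
    (by positivity : 0 ≤ 2 * Vmax + log (Fintype.card A) / η) (by simp) (fun k => by
      exact_mod_cast succ_mul_supNorm_sub_dpp_aux_le hP hγ0 hη hpol hΨ hE hQ0 hQ hQstar
        hQstar_le hΨ0 k) k
  set errSum := ∑ j ∈ range (k + 1), γ ^ (k - j) * supNorm (E j)
  calc supNorm (fun x a => Qstar x a - Q (k + 1) x a)
      = (k + 1) * supNorm (fun x a => Qstar x a - Q (k + 1) x a) / (k + 1) := by field_simp
    _ ≤ (γ * (2 * Vmax + log (Fintype.card A) / η) / (1 - γ) + errSum) / (k + 1) := by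
      gcongr
      exact_mod_cast hrec
    _ ≤ (γ * (4 * Vmax + log (Fintype.card A) / η) / (1 - γ) + errSum) / (k + 1) := by
      gcongr
      linarith
    _ = _ := by field_simp

/-- Lemma 4 of the paper: `ℓ∞`-norm bound on `Q* − Q_k` for the approximate DPP
auxiliary action-value functions. -/
theorem approx_dpp_auxiliary_error_bound
    {X A : Type*} [Fintype X] [Fintype A] [Nonempty X] [Nonempty A]
    (P : X → A → X → ℝ) (hP0 : ∀ x a x', 0 ≤ P x a x') (hP1 : ∀ x a, ∑ x', P x a x' = 1)
    (r : X → A → ℝ) (Rmax : ℝ) (hR : 0 < Rmax) (hr : ∀ x a, |r x a| ≤ Rmax)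
    (γ : ℝ) (hγ0 : 0 ≤ γ) (hγ1 : γ < 1)
    (Vmax : ℝ) (hV : Vmax = Rmax / (1 - γ))
    (η : ℝ) (hη : 0 < η)
    (ε : ℕ → X → A → ℝ)
    (E : ℕ → X → A → ℝ)
    (hE : ∀ k x a, E k x a = ∑ j ∈ Finset.range (k + 1), ε j x a)
    (Ψ : ℕ → X → A → ℝ) (hΨ0 : supNorm (Ψ 0) ≤ Vmax)
    (pol : ℕ → X → A → ℝ) (hpol : ∀ k, pol k = softmaxPol η (Ψ k))
    (hΨ : ∀ k x a, Ψ (k + 1) x a =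
      Ψ k x a + bellman P r γ (pol k) (Ψ k) x a - polApply (pol k) (Ψ k) x + ε k x a)
    (Qstar : X → A → ℝ) (hQstar : bellmanOpt P r γ Qstar = Qstar)
    (Q : ℕ → X → A → ℝ) (hQ0 : Q 0 = Ψ 0)
    (hQ : ∀ k : ℕ, ∀ x a, Q (k + 1) x a =
      ((k : ℝ) / (k + 1)) * bellman P r γ (pol k) (Q k) x a +
        (1 / ((k : ℝ) + 1)) * (bellman P r γ (pol k) (Q 0) x a + E k x a)) :
    ∀ k : ℕ, supNorm (fun x a => Qstar x a - Q (k + 1) x a) ≤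
      γ * (4 * Vmax + Real.log (Fintype.card A) / η) / ((1 - γ) * ((k : ℝ) + 1)) +
        (1 / ((k : ℝ) + 1)) *
          ∑ j ∈ Finset.range (k + 1), γ ^ (k - j) * supNorm (E j) :=
  approx_dpp_auxiliary_error_bound_general P hP0 hP1 r Rmax hr γ hγ0 hγ1 Vmax hV η hη ε E hE Ψ hΨ0
    pol hpol hΨ Qstar hQstar Q hQ0 hQ
end

section
/- Consider the approximate DPP iteration with parameter η > 0 started from Ψ_0, with error functions ε_k and accumulated errors E_k = Σ_{j=0}^k ε_j, and define the auxiliary action-value functions by Q_0 = Ψ_0 and Q_k = ((k−1)/k) T^{π_{k−1}} Q_{k−1} + (1/k)(T^{π_{k−1}} Q_0 + E_{k−1}) for k ≥ 1. Then for every integer k ≥ 1, the soft-max policy π_k associated with Ψ_k coincides with the soft-max policy associated with k Q_k + Q_0; that is, π_k(a|x) = exp(η(k Q_k(x,a) + Q_0(x,a))) / Σ_{a'} exp(η(k Q_k(x,a') + Q_0(x,a'))) for all (x,a). -/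
open Finset Real Filter

variable {X A : Type*}

lemma softmaxPol_sum_one [Fintype A] [Nonempty A] (η : ℝ) (Ψ : X → A → ℝ) (x : X) :
    ∑ a, softmaxPol η Ψ x a = 1 := by
  have hpos : 0 < ∑ a', Real.exp (η * Ψ x a') :=
    Finset.sum_pos (fun a _ => Real.exp_pos _) Finset.univ_nonempty
  simp only [softmaxPol]
  rw [← Finset.sum_div, div_self hpos.ne']

lemma softmaxPol_shift [Fintype A] [Nonempty A] (η : ℝ) (Ψ T : X → A → ℝ)
    (c : X → ℝ) (h : ∀ x a, Ψ x a = T x a - c x) :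
    softmaxPol η Ψ = softmaxPol η T := by
  funext x a
  have he : Real.exp (η * c x) ≠ 0 := (Real.exp_pos _).ne'
  have hq : (∑ a', Real.exp (η * T x a')) ≠ 0 :=
    (Finset.sum_pos (fun a _ => Real.exp_pos _) Finset.univ_nonempty).ne'
  simp only [softmaxPol, h, mul_sub, Real.exp_sub]
  rw [← Finset.sum_div]
  field_simp

/-- Equation (23) of the paper: the soft-max policy induced by the approximate DPP
action preferences `Ψ_k` coincides with the soft-max policy of `k Q_k + Q_0`. -/
theorem approx_dpp_policy_representation
    {X A : Type*} [Fintype X] [Fintype A] [Nonempty X] [Nonempty A]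
    (P : X → A → X → ℝ) (hP0 : ∀ x a x', 0 ≤ P x a x') (hP1 : ∀ x a, ∑ x', P x a x' = 1)
    (r : X → A → ℝ) (Rmax : ℝ) (hR : 0 < Rmax) (hr : ∀ x a, |r x a| ≤ Rmax)
    (γ : ℝ) (hγ0 : 0 ≤ γ) (hγ1 : γ < 1)
    (η : ℝ) (hη : 0 < η)
    (ε : ℕ → X → A → ℝ)
    (E : ℕ → X → A → ℝ)
    (hE : ∀ k x a, E k x a = ∑ j ∈ Finset.range (k + 1), ε j x a)
    (Ψ : ℕ → X → A → ℝ)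
    (pol : ℕ → X → A → ℝ) (hpol : ∀ k, pol k = softmaxPol η (Ψ k))
    (hΨ : ∀ k x a, Ψ (k + 1) x a =
      Ψ k x a + bellman P r γ (pol k) (Ψ k) x a - polApply (pol k) (Ψ k) x + ε k x a)
    (Q : ℕ → X → A → ℝ) (hQ0 : Q 0 = Ψ 0)
    (hQ : ∀ k : ℕ, ∀ x a, Q (k + 1) x a =
      ((k : ℝ) / (k + 1)) * bellman P r γ (pol k) (Q k) x a +
        (1 / ((k : ℝ) + 1)) * (bellman P r γ (pol k) (Q 0) x a + E k x a)) :
    ∀ k : ℕ, ∀ x a, pol (k + 1) x a =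
      Real.exp (η * (((k : ℝ) + 1) * Q (k + 1) x a + Q 0 x a)) /
        ∑ a', Real.exp (η * (((k : ℝ) + 1) * Q (k + 1) x a' + Q 0 x a')) := by
  -- policies sum to one
  have hpols : ∀ k x, ∑ a, pol k x a = 1 := by
    intro k x; rw [hpol k]; exact softmaxPol_sum_one η (Ψ k) x
  -- error accumulation
  have hEsucc : ∀ k x a, E k x a = (if k = 0 then 0 else E (k - 1) x a) + ε k x a := by
    intro k x a
    cases k with
    | zero => simp [hE]
    | succ k => simp only [Nat.succ_ne_zero, if_false, Nat.add_sub_cancel]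
                rw [hE (k+1), Finset.sum_range_succ, ← hE]
  -- main joint induction
  have key : ∀ k : ℕ,
      (∀ x a, (k : ℝ) * Q k x a + Q 0 x a =
          Ψ k x a + ∑ j ∈ Finset.range k, polApply (pol j) (Ψ j) x) ∧
      (∀ x a, (k : ℝ) * Q k x a = (k : ℝ) * r x a +
          γ * ∑ x', P x a x' * ∑ j ∈ Finset.range k, polApply (pol j) (Ψ j) x' +
          (if k = 0 then 0 else E (k - 1) x a)) := by
    intro k
    induction k with
    | zero => exact ⟨fun x a => by simp [hQ0], fun x a => by simp⟩
    | succ k ih =>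
      obtain ⟨ih1, ih2⟩ := ih
      -- auxiliary identity at k+1
      have newAux : ∀ x a, ((k : ℝ) + 1) * Q (k + 1) x a = ((k : ℝ) + 1) * r x a +
          γ * ∑ x', P x a x' * ∑ j ∈ Finset.range (k + 1), polApply (pol j) (Ψ j) x' +
          E k x a := by
        intro x a
        have hk1 : ((k : ℝ) + 1) ≠ 0 := by positivity
        have hmul : ((k : ℝ) + 1) * Q (k + 1) x a =
            (k : ℝ) * bellman P r γ (pol k) (Q k) x a +
              (bellman P r γ (pol k) (Q 0) x a + E k x a) := by
          rw [hQ k x a]; field_simp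
        have hinner : ∀ x', ∑ a', pol k x' a' * ((k : ℝ) * Q k x' a' + Q 0 x' a') =
            ∑ j ∈ Finset.range (k + 1), polApply (pol j) (Ψ j) x' := by
          intro x'
          have h1 : ∀ a', pol k x' a' * ((k : ℝ) * Q k x' a' + Q 0 x' a') =
              pol k x' a' * Ψ k x' a' +
                pol k x' a' * (∑ j ∈ Finset.range k, polApply (pol j) (Ψ j) x') := by
            intro a'; rw [ih1 x' a']; ring
          rw [Finset.sum_congr rfl (fun a' _ => h1 a'), Finset.sum_add_distrib,
            ← Finset.sum_mul, hpols k x', one_mul, Finset.sum_range_succ]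
          simp only [polApply]; ring
        have hsum : (k : ℝ) * (∑ x', ∑ a', P x a x' * pol k x' a' * Q k x' a') +
            ∑ x', ∑ a', P x a x' * pol k x' a' * Q 0 x' a' =
            ∑ x', P x a x' * ∑ j ∈ Finset.range (k + 1), polApply (pol j) (Ψ j) x' := by
          rw [Finset.mul_sum, ← Finset.sum_add_distrib]
          refine Finset.sum_congr rfl fun x' _ => ?_
          rw [← hinner x', Finset.mul_sum, Finset.mul_sum, ← Finset.sum_add_distrib]
          refine Finset.sum_congr rfl fun a' _ => ?_
          ring
        rw [hmul]
        simp only [bellman]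
        rw [← hsum]
        ring
      constructor
      · -- the representation at k+1
        intro x a
        push_cast
        have h1 := newAux x a
        have h2 := ih2 x a
        have h3 := ih1 x a
        have hEk := hEsucc k x a
        have h4 : ∑ x', P x a x' * ∑ j ∈ Finset.range (k + 1), polApply (pol j) (Ψ j) x' =
            (∑ x', P x a x' * ∑ j ∈ Finset.range k, polApply (pol j) (Ψ j) x') +
              ∑ x', ∑ a', P x a x' * pol k x' a' * Ψ k x' a' := by
          rw [← Finset.sum_add_distrib]
          refine Finset.sum_congr rfl fun x' _ => ?_
          rw [Finset.sum_range_succ, mul_add]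
          congr 1
          simp only [polApply, Finset.mul_sum]
          exact Finset.sum_congr rfl fun a' _ => by ring
        have h4g := congrArg (fun t => γ * t) h4
        simp only [mul_add] at h4g
        rw [hΨ k x a, Finset.sum_range_succ]
        simp only [bellman]
        linarith [h1, h2, h3, hEk, h4g]
      · -- the auxiliary identity at k+1, restated with the `if`
        intro x a
        push_cast
        simpa [Nat.add_sub_cancel] using newAux x a
  -- conclude via the softmax shift invariance
  intro k x a
  have hinv := (key (k + 1)).1
  have hp : pol (k + 1) = softmaxPol η
      (fun x a => ((k : ℝ) + 1) * Q (k + 1) x a + Q 0 x a) := by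
    rw [hpol (k + 1)]
    apply softmaxPol_shift η _ _
      (fun x => ∑ j ∈ Finset.range (k + 1), polApply (pol j) (Ψ j) x)
    intro x a
    have := hinv x a
    push_cast at this
    linarith
  rw [hp]
  rfl
end

section
/- On a probability space, let (ε_k)_{k≥0} be an i.i.d. sequence of random functions ε_k : X×A → ℝ with E[ε_k(x,a)] = 0 and |ε_k(x,a)| ≤ U almost surely for some finite U > 0 and all (x,a). Fix η > 0 and Ψ_0 with ‖Ψ_0‖ ≤ V_max, and define the random approximate DPP iterates by Ψ_{k+1}(x,a) = Ψ_k(x,a) + (T^{π_k} Ψ_k)(x,a) − (π_k Ψ_k)(x) + ε_k(x,a), where π_k is the soft-max policy associated with Ψ_k. Then, with probability 1, limsup_{k→∞} ‖Q* − Q^{π_k}‖ = 0. -/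
/-!
Summing the DPP recursion telescopes it into `ψ n = ψ 0 + n • (r + γ P ū n - ū n) + ∑_{j<n} ε j`,
where `ū n` is the running average of the soft-max values `π_j ψ_j`. A soft-max value is within
`|A| / η` of the greedy value, so `(n + 1) ū (n + 1)` equals `n` times the optimality operator
applied to `ū n` up to an error `O(1) + ‖∑_{j<n} ε j‖`, which is `o(n)` almost surely by the
strong law of large numbers; the contraction property then forces `ū n → V*`. Consequently
`ψ n / n → Q* - V*`, the soft-max policies concentrate on optimal actions, `π_n Q* → V*`, and
`‖Q* - Q^{π_n}‖ ≤ γ / (1 - γ) * ‖V* - π_n Q*‖ → 0`.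
-/

open Finset Real Filter

variable {X A : Type*}

open Topology MeasureTheory ProbabilityTheory

section WeightedSums

variable {ι : Type*} [Fintype ι] {p f : ι → ℝ}

lemma abs_sum_mul_le_of_sum_eq_one (hp0 : ∀ i, 0 ≤ p i) (hp1 : ∑ i, p i = 1) {c : ℝ}
    (hf : ∀ i, |f i| ≤ c) : |∑ i, p i * f i| ≤ c :=
  calc |∑ i, p i * f i| ≤ ∑ i, |p i * f i| := abs_sum_le_sum_abs _ _
    _ ≤ ∑ i, p i * c := by
        gcongr with i
        rw [abs_mul, abs_of_nonneg (hp0 i)]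
        exact mul_le_mul_of_nonneg_left (hf i) (hp0 i)
    _ = c := by rw [← sum_mul, hp1, one_mul]

variable [Nonempty ι]

lemma sum_mul_le_sup' (hp0 : ∀ i, 0 ≤ p i) (hp1 : ∑ i, p i = 1) :
    ∑ i, p i * f i ≤ univ.sup' univ_nonempty f :=
  calc ∑ i, p i * f i ≤ ∑ i, p i * univ.sup' univ_nonempty f := by
        gcongr with i
        · exact hp0 i
        · exact le_sup' f (mem_univ i)
    _ = univ.sup' univ_nonempty f := by rw [← sum_mul, hp1, one_mul]

lemma abs_sup'_sub_sup'_le {g : ι → ℝ} {c : ℝ} (h : ∀ i, |f i - g i| ≤ c) :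
    |univ.sup' univ_nonempty f - univ.sup' univ_nonempty g| ≤ c := by
  rw [abs_sub_le_iff, sub_le_iff_le_add, sub_le_iff_le_add]
  constructor
  · refine sup'_le _ _ fun i _ => ?_
    linarith [(abs_sub_le_iff.1 (h i)).1, le_sup' g (mem_univ i)]
  · refine sup'_le _ _ fun i _ => ?_
    linarith [(abs_sub_le_iff.1 (h i)).2, le_sup' f (mem_univ i)]

lemma tendsto_sum_mul_sup' {p : ℕ → ι → ℝ} (hp1 : ∀ n, ∑ i, p n i = 1)
    (hp : ∀ i, f i < univ.sup' univ_nonempty f → Tendsto (fun n => p n i) atTop (𝓝 0)) :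
    Tendsto (fun n => ∑ i, p n i * f i) atTop (𝓝 (univ.sup' univ_nonempty f)) := by
  set m := univ.sup' univ_nonempty f
  have hsplit : ∀ n, ∑ i, p n i * f i = m + ∑ i, p n i * (f i - m) := fun n => by
    simp only [mul_sub, sum_sub_distrib, ← sum_mul, hp1, one_mul, add_sub_cancel]
  have hterm : ∀ i, Tendsto (fun n => p n i * (f i - m)) atTop (𝓝 0) := fun i => by
    rcases (le_sup' f (mem_univ i)).lt_or_eq with hlt | heq
    · simpa using (hp i hlt).mul_const (f i - m)
    · simp [heq, m]
  simpa [hsplit] using (tendsto_finsetSum univ fun i _ => hterm i).const_add m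

end WeightedSums

lemma abs_apply_apply_le_norm {X A : Type*} [Fintype X] [Fintype A] (Q : X → A → ℝ)
    (x : X) (a : A) : |Q x a| ≤ ‖Q‖ :=
  (norm_le_pi_norm (Q x) a).trans (norm_le_pi_norm Q x)

lemma supNorm_eq_norm {X A : Type*} [Fintype X] [Fintype A] [Nonempty X] [Nonempty A]
    (Q : X → A → ℝ) : supNorm Q = ‖Q‖ := by
  have hle : ∀ x a, |Q x a| ≤ supNorm Q := fun x a =>
    le_sup' (fun p : X × A => |Q p.1 p.2|) (mem_univ (x, a))
  have h0 : 0 ≤ supNorm Q :=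
    (abs_nonneg _).trans (hle (Classical.arbitrary X) (Classical.arbitrary A))
  refine le_antisymm (sup'_le _ _ fun p _ => abs_apply_apply_le_norm Q p.1 p.2) ?_
  exact (pi_norm_le_iff_of_nonneg h0).2 fun x => (pi_norm_le_iff_of_nonneg h0).2 (hle x)

lemma tendsto_zero_of_le_mul_add {γ : ℝ} (hγ0 : 0 ≤ γ) (hγ1 : γ < 1) {d b : ℕ → ℝ}
    (hd : ∀ n, 0 ≤ d n) (hdb : ∀ n, d (n + 1) ≤ γ * d n + b n)
    (hb : Tendsto b atTop (𝓝 0)) : Tendsto d atTop (𝓝 0) := by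
  refine tendsto_order.2 ⟨fun c hc => .of_forall fun n => hc.trans_le (hd n), fun ε hε => ?_⟩
  obtain ⟨K, hK⟩ := eventually_atTop.1 ((tendsto_order.1 hb).2 ((1 - γ) * (ε / 2))
    (by nlinarith))
  have hdK : ∀ m, d (K + m) ≤ γ ^ m * d K + ε / 2 := fun m => by
    induction m with
    | zero => simp; linarith
    | succ m ih =>
      calc d (K + m + 1) ≤ γ * d (K + m) + b (K + m) := hdb _
        _ ≤ γ * (γ ^ m * d K + ε / 2) + (1 - γ) * (ε / 2) := by
          gcongr
          exact (hK _ (Nat.le_add_right K m)).le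
        _ = γ ^ (m + 1) * d K + ε / 2 := by ring
  have hpow : Tendsto (fun m => γ ^ m * d K) atTop (𝓝 0) := by
    simpa using (tendsto_pow_atTop_nhds_zero_of_lt_one hγ0 hγ1).mul_const (d K)
  obtain ⟨M, hM⟩ := eventually_atTop.1 ((tendsto_order.1 hpow).2 (ε / 2) (by linarith))
  refine eventually_atTop.2 ⟨K + M, fun n hn => ?_⟩
  obtain ⟨m, rfl⟩ := Nat.exists_eq_add_of_le (le_trans (Nat.le_add_right K M) hn)
  linarith [hdK m, hM m (by omega)]

lemma tendsto_of_norm_succ_smul_sub_smul_le {E : Type*} [NormedAddCommGroup E]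
    [NormedSpace ℝ E] {T : E → E} {γ : ℝ} (hγ0 : 0 ≤ γ) (hγ1 : γ < 1)
    (hT : ∀ v w, ‖T v - T w‖ ≤ γ * ‖v - w‖) {v₀ : E} (hv₀ : T v₀ = v₀) {u : ℕ → E}
    {c : ℕ → ℝ} (hu : ∀ n : ℕ, ‖((n : ℝ) + 1) • u (n + 1) - (n : ℝ) • T (u n)‖ ≤ c n)
    (hc : Tendsto (fun n : ℕ => c n / ((n : ℝ) + 1)) atTop (𝓝 0)) :
    Tendsto u atTop (𝓝 v₀) := by
  rw [tendsto_iff_norm_sub_tendsto_zero]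
  refine tendsto_zero_of_le_mul_add hγ0 hγ1 (fun n => norm_nonneg _)
    (b := fun n => c n / ((n : ℝ) + 1) + ‖v₀‖ / ((n : ℝ) + 1)) (fun n => ?_) ?_
  · have hn : (0 : ℝ) < n + 1 := by positivity
    have hsplit : ((n : ℝ) + 1) • (u (n + 1) - v₀) =
        (((n : ℝ) + 1) • u (n + 1) - (n : ℝ) • T (u n)) + (n : ℝ) • (T (u n) - T v₀) - v₀ := by
      rw [hv₀]; module
    have hmul : ((n : ℝ) + 1) * ‖u (n + 1) - v₀‖ ≤ c n + n * (γ * ‖u n - v₀‖) + ‖v₀‖ :=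
      calc ((n : ℝ) + 1) * ‖u (n + 1) - v₀‖ = ‖((n : ℝ) + 1) • (u (n + 1) - v₀)‖ := by
            rw [norm_smul, Real.norm_of_nonneg hn.le]
        _ ≤ ‖((n : ℝ) + 1) • u (n + 1) - (n : ℝ) • T (u n)‖ + ‖(n : ℝ) • (T (u n) - T v₀)‖
            + ‖v₀‖ := by
              rw [hsplit]; exact (norm_sub_le _ _).trans (by gcongr; apply norm_add_le)
        _ ≤ c n + n * (γ * ‖u n - v₀‖) + ‖v₀‖ := by
            rw [norm_smul, Real.norm_natCast]
            gcongr
            exacts [hu n, hT _ _]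
    rw [← add_div, ← sub_le_iff_le_add', le_div_iff₀ hn]
    nlinarith [mul_nonneg hγ0 (norm_nonneg (u n - v₀))]
  · simpa only [mul_one_div, mul_zero, add_zero] using
      hc.add (tendsto_one_div_add_atTop_nhds_zero_nat.const_mul ‖v₀‖)

lemma tendsto_norm_div_succ_of_tendsto_inv_smul {E : Type*} [NormedAddCommGroup E]
    [NormedSpace ℝ E] {f : ℕ → E} (hf : Tendsto (fun n : ℕ => (n : ℝ)⁻¹ • f n) atTop (𝓝 0)) :
    Tendsto (fun n : ℕ => ‖f n‖ / ((n : ℝ) + 1)) atTop (𝓝 0) := by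
  refine squeeze_zero' (.of_forall fun n => by positivity) ?_ (by simpa using hf.norm)
  filter_upwards [eventually_gt_atTop 0] with n hn
  rw [norm_smul, norm_inv, Real.norm_natCast, inv_mul_eq_div]
  exact div_le_div_of_nonneg_left (norm_nonneg _) (by positivity) (by linarith)

lemma tendsto_sub_atBot_of_tendsto_div {f g : ℕ → ℝ} {α β : ℝ}
    (hf : Tendsto (fun n : ℕ => f n / n) atTop (𝓝 α))
    (hg : Tendsto (fun n : ℕ => g n / n) atTop (𝓝 β)) (hαβ : α < β) :
    Tendsto (fun n => f n - g n) atTop atBot := by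
  refine (tendsto_natCast_atTop_atTop.atTop_mul_neg (sub_neg.2 hαβ) (hf.sub hg)).congr' ?_
  filter_upwards [eventually_ne_atTop 0] with n hn
  field_simp

section ActionValue

variable [Fintype X] (P : X → A → X → ℝ) (r : X → A → ℝ) (γ : ℝ)

def actionValue (v : X → ℝ) : X → A → ℝ :=
  fun x a => r x a + γ * ∑ x', P x a x' * v x'

lemma mul_actionValue (c : ℝ) (v : X → ℝ) (x : X) (a : A) :
    c * actionValue P r γ v x a = c * r x a + γ * ∑ x', P x a x' * (c • v) x' := by
  simp only [actionValue, Pi.smul_apply, smul_eq_mul, mul_add, mul_sum]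
  congr 1
  exact sum_congr rfl fun _ _ => by ring

lemma continuous_actionValue_apply (x : X) (a : A) :
    Continuous fun v : X → ℝ => actionValue P r γ v x a := by
  unfold actionValue
  fun_prop

variable {P γ}

lemma abs_actionValue_sub_actionValue_le (hP0 : ∀ x a x', 0 ≤ P x a x')
    (hP1 : ∀ x a, ∑ x', P x a x' = 1) (hγ0 : 0 ≤ γ) (v w : X → ℝ) (x : X) (a : A) :
    |actionValue P r γ v x a - actionValue P r γ w x a| ≤ γ * ‖v - w‖ := by
  have hdiff : actionValue P r γ v x a - actionValue P r γ w x a =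
      γ * ∑ x', P x a x' * (v - w) x' := by
    simp only [actionValue, Pi.sub_apply, mul_sub, sum_sub_distrib]
    ring
  rw [hdiff, abs_mul, abs_of_nonneg hγ0]
  exact mul_le_mul_of_nonneg_left (abs_sum_mul_le_of_sum_eq_one (hP0 x a) (hP1 x a)
    fun x' => norm_le_pi_norm (v - w) x') hγ0

end ActionValue

section GreedyValue

variable [Fintype A] [Nonempty A]

def greedyValue (Q : X → A → ℝ) : X → ℝ := fun x => univ.sup' univ_nonempty (Q x)

lemma polApply_le_greedyValue {pol : X → A → ℝ} (hpol0 : ∀ x a, 0 ≤ pol x a)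
    (hpol1 : ∀ x, ∑ a, pol x a = 1) (Q : X → A → ℝ) (x : X) :
    polApply pol Q x ≤ greedyValue Q x :=
  sum_mul_le_sup' (hpol0 x) (hpol1 x)

end GreedyValue

section Bellman

variable [Fintype X] [Fintype A] {P : X → A → X → ℝ} (r : X → A → ℝ) {γ : ℝ}

lemma bellman_eq_actionValue (pol Q : X → A → ℝ) :
    bellman P r γ pol Q = actionValue P r γ (polApply pol Q) := by
  ext x a
  simp only [bellman, actionValue, polApply, mul_sum, mul_assoc]

lemma norm_polApply_sub_polApply_le {pol : X → A → ℝ} (hpol0 : ∀ x a, 0 ≤ pol x a)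
    (hpol1 : ∀ x, ∑ a, pol x a = 1) (Q Q' : X → A → ℝ) :
    ‖polApply pol Q - polApply pol Q'‖ ≤ ‖Q - Q'‖ := by
  refine (pi_norm_le_iff_of_nonneg (norm_nonneg _)).2 fun x => ?_
  have hdiff : (polApply pol Q - polApply pol Q') x = ∑ a, pol x a * (Q - Q') x a := by
    simp only [polApply, Pi.sub_apply, mul_sub, sum_sub_distrib]
  rw [hdiff, Real.norm_eq_abs]
  exact abs_sum_mul_le_of_sum_eq_one (hpol0 x) (hpol1 x) (abs_apply_apply_le_norm (Q - Q') x)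

lemma norm_actionValue_sub_le_of_bellman_eq (hP0 : ∀ x a x', 0 ≤ P x a x')
    (hP1 : ∀ x a, ∑ x', P x a x' = 1) (hγ0 : 0 ≤ γ) (hγ1 : γ < 1) {pol : X → A → ℝ}
    (hpol0 : ∀ x a, 0 ≤ pol x a) (hpol1 : ∀ x, ∑ a, pol x a = 1) (v : X → ℝ)
    {Q : X → A → ℝ} (hQ : bellman P r γ pol Q = Q) :
    ‖actionValue P r γ v - Q‖ ≤ γ / (1 - γ) * ‖v - polApply pol (actionValue P r γ v)‖ := by
  set Q' := actionValue P r γ v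
  have hQ' : ‖Q' - Q‖ ≤ γ * ‖v - polApply pol Q‖ := by
    refine (pi_norm_le_iff_of_nonneg (by positivity)).2 fun x =>
      (pi_norm_le_iff_of_nonneg (by positivity)).2 fun a => ?_
    have := abs_actionValue_sub_actionValue_le r hP0 hP1 hγ0 v (polApply pol Q) x a
    rw [← bellman_eq_actionValue, hQ] at this
    rwa [Pi.sub_apply, Pi.sub_apply, Real.norm_eq_abs]
  have hv : ‖v - polApply pol Q‖ ≤ ‖v - polApply pol Q'‖ + ‖Q' - Q‖ :=
    calc _ ≤ ‖v - polApply pol Q'‖ + ‖polApply pol Q' - polApply pol Q‖ :=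
          norm_sub_le_norm_sub_add_norm_sub _ _ _
      _ ≤ _ := by grw [norm_polApply_sub_polApply_le hpol0 hpol1 Q' Q]
  have := mul_le_mul_of_nonneg_left hv hγ0
  rw [div_mul_eq_mul_div, le_div_iff₀ (sub_pos.2 hγ1)]
  linarith

lemma norm_greedyValue_actionValue_sub_le [Nonempty A] (hP0 : ∀ x a x', 0 ≤ P x a x')
    (hP1 : ∀ x a, ∑ x', P x a x' = 1) (hγ0 : 0 ≤ γ) (v w : X → ℝ) :
    ‖greedyValue (actionValue P r γ v) - greedyValue (actionValue P r γ w)‖ ≤ γ * ‖v - w‖ :=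
  (pi_norm_le_iff_of_nonneg (by positivity)).2 fun x =>
    abs_sup'_sub_sup'_le (abs_actionValue_sub_actionValue_le r hP0 hP1 hγ0 v w x)

end Bellman

section Softmax

variable [Fintype A] [Nonempty A] (η : ℝ) (Ψ : X → A → ℝ) (x : X)

lemma sum_exp_pos : 0 < ∑ a, Real.exp (η * Ψ x a) :=
  sum_pos (fun _ _ => Real.exp_pos _) univ_nonempty

lemma softmaxPol_nonneg (a : A) : 0 ≤ softmaxPol η Ψ x a :=
  div_nonneg (Real.exp_pos _).le (sum_exp_pos η Ψ x).le

lemma sum_softmaxPol : ∑ a, softmaxPol η Ψ x a = 1 := by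
  simp only [softmaxPol]
  rw [← sum_div, div_self (sum_exp_pos η Ψ x).ne']

lemma softmaxPol_le_exp (a b : A) :
    softmaxPol η Ψ x a ≤ Real.exp (η * (Ψ x a - Ψ x b)) := by
  simp only [softmaxPol]
  rw [mul_sub, Real.exp_sub, div_le_div_iff_of_pos_left (Real.exp_pos _)
    (sum_exp_pos η Ψ x) (Real.exp_pos _)]
  exact single_le_sum (f := fun a' => Real.exp (η * Ψ x a'))
    (fun _ _ => (Real.exp_pos _).le) (mem_univ b)

lemma neg_inv_le_mul_exp_mul {η : ℝ} (hη : 0 < η) (t : ℝ) :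
    -η⁻¹ ≤ t * Real.exp (η * t) := by
  have hs : -(η * t) * Real.exp (η * t) ≤ 1 := by
    have := Real.add_one_le_exp (-(η * t))
    rw [Real.exp_neg] at this
    have hE := Real.exp_pos (η * t)
    calc -(η * t) * Real.exp (η * t) ≤ (Real.exp (η * t))⁻¹ * Real.exp (η * t) := by
          gcongr; linarith
      _ = 1 := inv_mul_cancel₀ hE.ne'
  rw [neg_le, ← one_div, le_div_iff₀' hη]
  linarith

lemma greedyValue_sub_le_polApply_softmaxPol {η : ℝ} (hη : 0 < η) :
    greedyValue Ψ x - Fintype.card A / η ≤ polApply (softmaxPol η Ψ) Ψ x := by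
  obtain ⟨b, -, hb⟩ := exists_mem_eq_sup' (univ_nonempty (α := A)) (Ψ x)
  have hterm : ∀ a, -η⁻¹ ≤ softmaxPol η Ψ x a * (Ψ x a - Ψ x b) := fun a => by
    have hab : Ψ x a - Ψ x b ≤ 0 := by
      rw [sub_nonpos, ← hb]; exact le_sup' (Ψ x) (mem_univ a)
    calc -η⁻¹ ≤ (Ψ x a - Ψ x b) * Real.exp (η * (Ψ x a - Ψ x b)) :=
          neg_inv_le_mul_exp_mul hη _
      _ ≤ softmaxPol η Ψ x a * (Ψ x a - Ψ x b) := by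
          rw [mul_comm]; exact mul_le_mul_of_nonpos_right (softmaxPol_le_exp η Ψ x a b) hab
  have hsum : polApply (softmaxPol η Ψ) Ψ x - Ψ x b =
      ∑ a, softmaxPol η Ψ x a * (Ψ x a - Ψ x b) := by
    simp only [polApply, mul_sub, sum_sub_distrib, ← sum_mul, sum_softmaxPol, one_mul]
  have := sum_le_sum fun a (_ : a ∈ univ) => hterm a
  rw [sum_const, card_univ, nsmul_eq_mul, ← hsum] at this
  rw [greedyValue, hb, div_eq_mul_inv]
  linarith

lemma tendsto_softmaxPol_zero {η : ℝ} (hη : 0 < η) {Ψ : ℕ → X → A → ℝ} {a b : A}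
    (h : Tendsto (fun n => Ψ n x a - Ψ n x b) atTop atBot) :
    Tendsto (fun n => softmaxPol η (Ψ n) x a) atTop (𝓝 0) :=
  squeeze_zero (fun n => softmaxPol_nonneg η (Ψ n) x a)
    (fun n => softmaxPol_le_exp η (Ψ n) x a b)
    (Real.tendsto_exp_atBot.comp (h.const_mul_atBot hη))

end Softmax

section DPP

noncomputable def dppValueSum [Fintype A] (η : ℝ) (ψ : ℕ → X → A → ℝ) (n : ℕ) : X → ℝ :=
  ∑ j ∈ range n, polApply (softmaxPol η (ψ j)) (ψ j)

noncomputable def dppAvgValue [Fintype A] (η : ℝ) (ψ : ℕ → X → A → ℝ) (n : ℕ) : X → ℝ :=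
  (n : ℝ)⁻¹ • dppValueSum η ψ n

lemma natCast_smul_dppAvgValue [Fintype A] (η : ℝ) (ψ : ℕ → X → A → ℝ) (n : ℕ) :
    (n : ℝ) • dppAvgValue η ψ n = dppValueSum η ψ n := by
  rcases n.eq_zero_or_pos with rfl | hn
  · simp [dppValueSum]
  · exact smul_inv_smul₀ (by positivity) _

def IsApproxDPP [Fintype X] [Fintype A] (P : X → A → X → ℝ) (r : X → A → ℝ) (γ η : ℝ)
    (e ψ : ℕ → X → A → ℝ) : Prop :=
  ∀ n x a, ψ (n + 1) x a = ψ n x a + bellman P r γ (softmaxPol η (ψ n)) (ψ n) x a -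
    polApply (softmaxPol η (ψ n)) (ψ n) x + e n x a

variable [Fintype X] [Fintype A] {P : X → A → X → ℝ} {r : X → A → ℝ} {γ η : ℝ}
  {e ψ : ℕ → X → A → ℝ}

lemma IsApproxDPP.eq_add_dppValueSum (hψ : IsApproxDPP P r γ η e ψ) (n : ℕ) (x : X) (a : A) :
    ψ n x a = ψ 0 x a + n * r x a + γ * ∑ x', P x a x' * dppValueSum η ψ n x' -
      dppValueSum η ψ n x + (∑ j ∈ range n, e j) x a := by
  induction n generalizing x a with
  | zero => simp [dppValueSum]
  | succ n ih =>
    rw [hψ, ih, bellman_eq_actionValue]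
    simp only [dppValueSum, sum_range_succ, Pi.add_apply, actionValue, mul_add, sum_add_distrib]
    push_cast
    ring

lemma IsApproxDPP.eq_dppAvgValue (hψ : IsApproxDPP P r γ η e ψ) (n : ℕ) (x : X) (a : A) :
    ψ n x a = n * (actionValue P r γ (dppAvgValue η ψ n) x a - dppAvgValue η ψ n x) +
      (ψ 0 + ∑ j ∈ range n, e j) x a := by
  have hsum : (n : ℝ) * dppAvgValue η ψ n x = dppValueSum η ψ n x := by
    rw [← natCast_smul_dppAvgValue]; rfl
  rw [mul_sub, mul_actionValue, natCast_smul_dppAvgValue, hsum, hψ.eq_add_dppValueSum]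
  simp only [Pi.add_apply]
  ring

variable [Nonempty A]

lemma IsApproxDPP.norm_succ_smul_dppAvgValue_sub_le (hψ : IsApproxDPP P r γ η e ψ)
    (hη : 0 < η) (n : ℕ) :
    ‖((n : ℝ) + 1) • dppAvgValue η ψ (n + 1) -
        (n : ℝ) • greedyValue (actionValue P r γ (dppAvgValue η ψ n))‖ ≤
      Fintype.card A / η + ‖ψ 0‖ + ‖∑ j ∈ range n, e j‖ := by
  set u := dppAvgValue η ψ
  set V := polApply (softmaxPol η (ψ n)) (ψ n)
  have hsucc : ((n : ℝ) + 1) • u (n + 1) = dppValueSum η ψ n + V := by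
    rw [← Nat.cast_succ, natCast_smul_dppAvgValue, dppValueSum, dppValueSum, sum_range_succ]
  have hsum : ∀ x, dppValueSum η ψ n x = n * u n x := fun x => by
    rw [← natCast_smul_dppAvgValue]; rfl
  refine (pi_norm_le_iff_of_nonneg (by positivity)).2 fun x => ?_
  have hsoft : |V x - greedyValue (ψ n) x| ≤ Fintype.card A / η := by
    have hle := polApply_le_greedyValue (softmaxPol_nonneg η (ψ n)) (sum_softmaxPol η (ψ n))
      (ψ n) x
    have hge := greedyValue_sub_le_polApply_softmaxPol (ψ n) x hη
    have hc : 0 ≤ (Fintype.card A : ℝ) / η := by positivity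
    rw [abs_sub_le_iff]
    constructor <;> linarith
  have hgreedy : |greedyValue (ψ n) x + dppValueSum η ψ n x -
      n * greedyValue (actionValue P r γ (u n)) x| ≤ ‖ψ 0 + ∑ j ∈ range n, e j‖ := by
    rw [greedyValue, greedyValue, sup'_add, mul₀_sup' (Nat.cast_nonneg n)]
    refine abs_sup'_sub_sup'_le fun a => ?_
    convert abs_apply_apply_le_norm (ψ 0 + ∑ j ∈ range n, e j) x a using 2
    rw [hψ.eq_dppAvgValue, hsum]
    ring
  calc ‖(((n : ℝ) + 1) • u (n + 1) - (n : ℝ) • greedyValue (actionValue P r γ (u n))) x‖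
      = |(V x - greedyValue (ψ n) x) + (greedyValue (ψ n) x + dppValueSum η ψ n x -
          n * greedyValue (actionValue P r γ (u n)) x)| := by
        rw [Pi.sub_apply, hsucc, Real.norm_eq_abs]
        simp only [Pi.add_apply, Pi.smul_apply, smul_eq_mul]
        ring_nf
    _ ≤ Fintype.card A / η + ‖ψ 0‖ + ‖∑ j ∈ range n, e j‖ := by
        linarith [abs_add_le (V x - greedyValue (ψ n) x) (greedyValue (ψ n) x +
          dppValueSum η ψ n x - n * greedyValue (actionValue P r γ (u n)) x),
          norm_add_le (ψ 0) (∑ j ∈ range n, e j)]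

variable (hP0 : ∀ x a x', 0 ≤ P x a x') (hP1 : ∀ x a, ∑ x', P x a x' = 1) (hγ0 : 0 ≤ γ)
  (hγ1 : γ < 1) (hη : 0 < η)
  (he : Tendsto (fun n : ℕ => (n : ℝ)⁻¹ • ∑ j ∈ range n, e j) atTop (𝓝 0))
  {Qstar : X → A → ℝ} (hQstar : bellmanOpt P r γ Qstar = Qstar)
include hP0 hP1 hγ0 hγ1 hη he hQstar

lemma IsApproxDPP.tendsto_dppAvgValue (hψ : IsApproxDPP P r γ η e ψ) :
    Tendsto (dppAvgValue η ψ) atTop (𝓝 (greedyValue Qstar)) := by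
  refine tendsto_of_norm_succ_smul_sub_smul_le hγ0 hγ1
    (norm_greedyValue_actionValue_sub_le r hP0 hP1 hγ0) (congrArg greedyValue hQstar)
    (hψ.norm_succ_smul_dppAvgValue_sub_le hη) ?_
  simpa only [add_div, mul_one_div, mul_zero, zero_add] using
    (tendsto_one_div_add_atTop_nhds_zero_nat.const_mul (Fintype.card A / η + ‖ψ 0‖)).add
      (tendsto_norm_div_succ_of_tendsto_inv_smul he)

lemma IsApproxDPP.tendsto_div (hψ : IsApproxDPP P r γ η e ψ) (x : X) (a : A) :
    Tendsto (fun n : ℕ => ψ n x a / n) atTop (𝓝 (Qstar x a - greedyValue Qstar x)) := by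
  have hu := hψ.tendsto_dppAvgValue hP0 hP1 hγ0 hγ1 hη he hQstar
  have hQ : Tendsto (fun n => actionValue P r γ (dppAvgValue η ψ n) x a) atTop
      (𝓝 (Qstar x a)) := by
    rw [← congrFun₂ hQstar x a]
    exact ((continuous_actionValue_apply P r γ x a).tendsto _).comp hu
  have hW : Tendsto (fun n : ℕ => (n : ℝ)⁻¹ • (ψ 0 + ∑ j ∈ range n, e j)) atTop (𝓝 0) := by
    simpa only [smul_add, zero_smul, zero_add, Function.comp_def] using
      ((tendsto_inv_atTop_zero.comp (tendsto_natCast_atTop_atTop (R := ℝ))).smul_const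
        (ψ 0)).add he
  have hlim := (hQ.sub (tendsto_pi_nhds.1 hu x)).add
    (tendsto_pi_nhds.1 (tendsto_pi_nhds.1 hW x) a)
  rw [Pi.zero_apply, Pi.zero_apply, add_zero] at hlim
  refine hlim.congr' ?_
  filter_upwards [eventually_ne_atTop 0] with n hn
  rw [hψ.eq_dppAvgValue n x a]
  simp only [Pi.smul_apply, smul_eq_mul]
  field_simp

lemma IsApproxDPP.tendsto_polApply_softmaxPol (hψ : IsApproxDPP P r γ η e ψ) (x : X) :
    Tendsto (fun n => polApply (softmaxPol η (ψ n)) Qstar x) atTop (𝓝 (greedyValue Qstar x)) := by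
  refine tendsto_sum_mul_sup' (fun n => sum_softmaxPol η (ψ n) x) fun a ha => ?_
  obtain ⟨b, -, hb⟩ := exists_mem_eq_sup' (univ_nonempty (α := A)) (Qstar x)
  have hdiv := hψ.tendsto_div hP0 hP1 hγ0 hγ1 hη he hQstar x
  exact tendsto_softmaxPol_zero x hη (b := b)
    (tendsto_sub_atBot_of_tendsto_div (hdiv a) (hdiv b) (by rw [hb] at ha; linarith))

theorem IsApproxDPP.tendsto_norm_sub_policyValue (hψ : IsApproxDPP P r γ η e ψ)
    {Qpi : ℕ → X → A → ℝ} (hQpi : ∀ n, bellman P r γ (softmaxPol η (ψ n)) (Qpi n) = Qpi n) :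
    Tendsto (fun n => ‖Qstar - Qpi n‖) atTop (𝓝 0) := by
  have hV : Tendsto (fun n => ‖greedyValue Qstar - polApply (softmaxPol η (ψ n)) Qstar‖)
      atTop (𝓝 0) := by
    simpa only [norm_sub_rev] using tendsto_iff_norm_sub_tendsto_zero.1
      (tendsto_pi_nhds.2 (hψ.tendsto_polApply_softmaxPol hP0 hP1 hγ0 hγ1 hη he hQstar))
  refine squeeze_zero (fun n => norm_nonneg _) (fun n => ?_)
    (by simpa using hV.const_mul (γ / (1 - γ)))
  have := norm_actionValue_sub_le_of_bellman_eq r hP0 hP1 hγ0 hγ1 (softmaxPol_nonneg η (ψ n))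
    (sum_softmaxPol η (ψ n)) (greedyValue Qstar) (hQpi n)
  rwa [show actionValue P r γ (greedyValue Qstar) = Qstar from hQstar] at this

end DPP

lemma ae_tendsto_inv_smul_sum_of_iIndepFun [Fintype X] [Fintype A] {Ω : Type*}
    [MeasurableSpace Ω] {μ : Measure Ω} [IsProbabilityMeasure μ] {ε : ℕ → Ω → X → A → ℝ}
    (hεmeas : ∀ k, Measurable (ε k)) (hεindep : iIndepFun ε μ)
    (hεident : ∀ k, μ.map (ε k) = μ.map (ε 0)) (hεmean : ∀ x a, ∫ ω, ε 0 ω x a ∂μ = 0)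
    {U : ℝ} (hεbdd : ∀ᵐ ω ∂μ, ∀ x a, |ε 0 ω x a| ≤ U) :
    ∀ᵐ ω ∂μ, Tendsto (fun n : ℕ => (n : ℝ)⁻¹ • ∑ j ∈ range n, ε j ω) atTop (𝓝 0) := by
  have hint : Integrable (ε 0) μ := by
    refine .of_bound (hεmeas 0).aestronglyMeasurable |U| ?_
    filter_upwards [hεbdd] with ω hω
    exact (pi_norm_le_iff_of_nonneg (abs_nonneg U)).2 fun x =>
      (pi_norm_le_iff_of_nonneg (abs_nonneg U)).2 fun a => (hω x a).trans (le_abs_self U)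
  have hmean : μ[ε 0] = 0 := by
    ext x a
    rw [eval_integral (fun x => hint.eval x), eval_integral (fun a => (hint.eval x).eval a)]
    exact hεmean x a
  simpa [hmean] using strong_law_ae ε hint (fun i j hij => hεindep.indepFun hij)
    fun i => ⟨(hεmeas i).aemeasurable, (hεmeas 0).aemeasurable, hεident i⟩

theorem approx_dpp_iid_noise_convergence_general
    {X A : Type*} [Fintype X] [Fintype A] [Nonempty X] [Nonempty A]
    {Ω : Type*} [MeasurableSpace Ω] (μ : MeasureTheory.Measure Ω)
    [MeasureTheory.IsProbabilityMeasure μ]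
    (P : X → A → X → ℝ) (hP0 : ∀ x a x', 0 ≤ P x a x') (hP1 : ∀ x a, ∑ x', P x a x' = 1)
    (r : X → A → ℝ)
    (γ : ℝ) (hγ0 : 0 ≤ γ) (hγ1 : γ < 1)
    (η : ℝ) (hη : 0 < η)
    -- the i.i.d. zero-mean bounded random error functions
    (ε : ℕ → Ω → X → A → ℝ)
    (hεmeas : ∀ k, Measurable (ε k))
    (hεindep : ProbabilityTheory.iIndepFun ε μ)
    (hεident : ∀ k, MeasureTheory.Measure.map (ε k) μ = MeasureTheory.Measure.map (ε 0) μ)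
    (hεmean : ∀ k x a, ∫ ω, ε k ω x a ∂μ = 0)
    (U : ℝ)
    (hεbdd : ∀ᵐ ω ∂μ, ∀ k x a, |ε k ω x a| ≤ U)
    -- the random approximate DPP iterates
    (Ψ : ℕ → Ω → X → A → ℝ)
    (pol : ℕ → Ω → X → A → ℝ) (hpol : ∀ k ω, pol k ω = softmaxPol η (Ψ k ω))
    (hΨ : ∀ k ω x a, Ψ (k + 1) ω x a =
      Ψ k ω x a + bellman P r γ (pol k ω) (Ψ k ω) x a -
        polApply (pol k ω) (Ψ k ω) x + ε k ω x a)
    (Qstar : X → A → ℝ) (hQstar : bellmanOpt P r γ Qstar = Qstar)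
    (Qpi : ℕ → Ω → X → A → ℝ)
    (hQpi : ∀ k ω, bellman P r γ (pol k ω) (Qpi k ω) = Qpi k ω) :
    μ {ω | Filter.limsup
        (fun k => supNorm (fun x a => Qstar x a - Qpi k ω x a)) Filter.atTop = 0} = 1 := by
  obtain rfl : pol = fun k ω => softmaxPol η (Ψ k ω) := funext fun k => funext (hpol k)
  have hconv : ∀ᵐ ω ∂μ, Filter.limsup
      (fun k => supNorm (fun x a => Qstar x a - Qpi k ω x a)) Filter.atTop = 0 := by
    filter_upwards [ae_tendsto_inv_smul_sum_of_iIndepFun hεmeas hεindep hεident (hεmean 0)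
      (hεbdd.mono fun _ h => h 0)] with ω hω
    have hψ : IsApproxDPP P r γ η (fun k => ε k ω) (fun k => Ψ k ω) := fun k => hΨ k ω
    simp only [supNorm_eq_norm]
    exact (hψ.tendsto_norm_sub_policyValue hP0 hP1 hγ0 hγ1 hη hω hQstar (hQpi · ω)).limsup_eq
  exact (measure_congr (ae_eq_univ.2 hconv)).trans measure_univ

/-- Equation (14) of the paper: with i.i.d. zero-mean bounded errors, the approximate
DPP iteration converges almost surely to the optimal policy,
i.e. `limsup_k ‖Q* − Q^{π_k}‖ = 0` with probability 1. -/
theorem approx_dpp_iid_noise_convergence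
    {X A : Type*} [Fintype X] [Fintype A] [Nonempty X] [Nonempty A]
    {Ω : Type*} [MeasurableSpace Ω] (μ : MeasureTheory.Measure Ω)
    [MeasureTheory.IsProbabilityMeasure μ]
    (P : X → A → X → ℝ) (hP0 : ∀ x a x', 0 ≤ P x a x') (hP1 : ∀ x a, ∑ x', P x a x' = 1)
    (r : X → A → ℝ) (Rmax : ℝ) (hR : 0 < Rmax) (hr : ∀ x a, |r x a| ≤ Rmax)
    (γ : ℝ) (hγ0 : 0 ≤ γ) (hγ1 : γ < 1)
    (Vmax : ℝ) (hV : Vmax = Rmax / (1 - γ))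
    (η : ℝ) (hη : 0 < η)
    -- the i.i.d. zero-mean bounded random error functions
    (ε : ℕ → Ω → X → A → ℝ)
    (hεmeas : ∀ k, Measurable (ε k))
    (hεindep : ProbabilityTheory.iIndepFun ε μ)
    (hεident : ∀ k, MeasureTheory.Measure.map (ε k) μ = MeasureTheory.Measure.map (ε 0) μ)
    (hεmean : ∀ k x a, ∫ ω, ε k ω x a ∂μ = 0)
    (U : ℝ) (hU : 0 < U)
    (hεbdd : ∀ᵐ ω ∂μ, ∀ k x a, |ε k ω x a| ≤ U)
    -- the random approximate DPP iterates
    (Ψ : ℕ → Ω → X → A → ℝ)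
    (hΨ0 : ∀ ω, supNorm (Ψ 0 ω) ≤ Vmax) (hΨ0det : ∀ ω ω', Ψ 0 ω = Ψ 0 ω')
    (pol : ℕ → Ω → X → A → ℝ) (hpol : ∀ k ω, pol k ω = softmaxPol η (Ψ k ω))
    (hΨ : ∀ k ω x a, Ψ (k + 1) ω x a =
      Ψ k ω x a + bellman P r γ (pol k ω) (Ψ k ω) x a -
        polApply (pol k ω) (Ψ k ω) x + ε k ω x a)
    (Qstar : X → A → ℝ) (hQstar : bellmanOpt P r γ Qstar = Qstar)
    (Qpi : ℕ → Ω → X → A → ℝ)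
    (hQpi : ∀ k ω, bellman P r γ (pol k ω) (Qpi k ω) = Qpi k ω) :
    μ {ω | Filter.limsup
        (fun k => supNorm (fun x a => Qstar x a - Qpi k ω x a)) Filter.atTop = 0} = 1 :=
  approx_dpp_iid_noise_convergence_general μ P hP0 hP1 r γ hγ0 hγ1 η hη ε hεmeas hεindep hεident
    hεmean U hεbdd Ψ pol hpol hΨ Qstar hQstar Qpi hQpi
end
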